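/- arXiv:1606.00835 — 3 statements merged into one kernel-verified Lean document; each statement's English description precedes it below -/
import Mathlib

section
/- There exist squarefree words over the ternary alphabet {0,1,2} of every length n ≥ 0; equivalently, there are infinitely many ternary squarefree words. -/
/-- A word is squarefree if it contains no factor `x ++ x` with `x` nonempty. -/
def IsSquarefreeWord {α : Type*} (w : List α) : Prop :=
  ∀ x : List α, x ≠ [] → ¬ ∃ a b : List α, w = a ++ x ++ x ++ b

/-!
Iterating a squarefree-preserving morphism on a letter gives arbitrarily long squarefree words,
and their prefixes give every length. The morphism used is an 11-uniform morphism `h` of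
`{0,1,2}*`. It preserves squarefreeness by the following criterion for a `k`-uniform injective
morphism. Let `x x` be a square in `h(w)` starting at offset `r < k` in the block of some letter.
If it is short (`r + 2|x| ≤ 4k`), it lies in the image of a factor of `w` of length at most 4,
and a finite check rules it out. Otherwise its first half contains a whole block `h(c)`, which
reappears one period later; since `h(c)` occurs in `h(a) h(b)` (`a ≠ b`) only at the block
boundaries, the period is a multiple `k m` of `k`. Comparing blocks then gives a square of
period `m` in `w`: directly if `r = 0`, and through the condition on how `h(b)` can be split
at `r` if `r > 0`.
-/

variable {α β : Type*}

theorem isSquarefreeWord_iff_forall_infix {w : List α} :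
    IsSquarefreeWord w ↔ ∀ x, x ≠ [] → ¬ x ++ x <:+: w := by
  simp only [IsSquarefreeWord, List.IsInfix, List.append_assoc, eq_comm]

theorem IsSquarefreeWord.of_infix {v w : List α} (hw : IsSquarefreeWord w) (hvw : v <:+: w) :
    IsSquarefreeWord v := by
  rw [isSquarefreeWord_iff_forall_infix] at hw ⊢
  exact fun x hx hxv => hw x hx (hxv.trans hvw)

theorem isSquarefreeWord_iff_forall_mem_tails {w : List α} :
    IsSquarefreeWord w ↔
      ∀ s ∈ w.tails, ∀ n < s.length / 2, ¬ s.take (n + 1) <+: s.drop (n + 1) := by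
  simp only [isSquarefreeWord_iff_forall_infix, List.mem_tails]
  constructor
  · rintro hw s ⟨a, rfl⟩ n hn ⟨t, ht⟩
    refine hw (s.take (n + 1)) (List.ne_nil_of_length_pos (by simp; omega)) ⟨a, t, ?_⟩
    simp only [List.append_assoc, ht, List.take_append_drop]
  · rintro hw x hx ⟨a, b, rfl⟩
    have hx0 := List.length_pos_iff.mpr hx
    refine hw (x ++ x ++ b) ⟨a, by simp⟩ (x.length - 1) (by simp; omega) ?_
    rw [Nat.sub_add_cancel hx0, List.append_assoc, List.take_left' rfl, List.drop_left' rfl]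
    exact List.prefix_append x b

instance [DecidableEq α] : DecidablePred (IsSquarefreeWord (α := α)) := fun _ =>
  decidable_of_iff _ isSquarefreeWord_iff_forall_mem_tails.symm

theorem prefix_drop_add_length_of_append_self_prefix {b x l : List α} {n : ℕ}
    (hxl : x ++ x <+: l) (hb : b <+: l.drop n) (hn : n + b.length ≤ x.length) :
    b <+: l.drop (n + x.length) := by
  obtain ⟨t, rfl⟩ := hxl
  rw [List.append_assoc, List.drop_append_of_le_length (by omega)] at hb
  have hbx : b <+: x.drop n :=
    List.prefix_of_prefix_length_le hb (List.prefix_append _ _) (by simp; omega)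
  rw [List.append_assoc, Nat.add_comm, ← List.drop_drop, List.drop_left' rfl,
    List.drop_append_of_le_length (by omega)]
  exact hbx.trans (List.prefix_append _ _)

section Uniform

variable {h : α → List β} {k : ℕ}

theorem length_flatMap_of_uniform (hk : ∀ a, (h a).length = k) (w : List α) :
    (w.flatMap h).length = k * w.length := by
  simp [List.length_flatMap, hk, mul_comm]

theorem drop_flatMap_of_uniform (hk : ∀ a, (h a).length = k) (w : List α) (n : ℕ) :
    (w.flatMap h).drop (k * n) = (w.drop n).flatMap h := by
  induction w generalizing n with
  | nil => simp
  | cons a w ih =>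
    cases n with
    | zero => simp
    | succ n =>
      rw [List.flatMap_cons, show k * (n + 1) = (h a).length + k * n by rw [hk]; ring,
        List.drop_length_add_append, ih]
      rfl

theorem take_flatMap_of_uniform (hk : ∀ a, (h a).length = k) (w : List α) (n : ℕ) :
    (w.flatMap h).take (k * n) = (w.take n).flatMap h := by
  induction w generalizing n with
  | nil => simp
  | cons a w ih =>
    cases n with
    | zero => simp
    | succ n =>
      rw [List.flatMap_cons, show k * (n + 1) = (h a).length + k * n by rw [hk]; ring,
        List.take_length_add_append, ih]
      rfl

theorem flatMap_inj_of_uniform (hk : ∀ a, (h a).length = k) (hinj : Function.Injective h)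
    {u v : List α} (hlen : u.length = v.length) (huv : u.flatMap h = v.flatMap h) : u = v := by
  induction u generalizing v with
  | nil => simpa [eq_comm] using hlen
  | cons a u ih =>
    obtain _ | ⟨b, v⟩ := v
    · simp at hlen
    obtain ⟨hab, huv⟩ := List.append_inj huv (by rw [hk, hk])
    rw [hinj hab, ih (by simpa using hlen) huv]

theorem dvd_of_prefix_drop_flatMap (hk : ∀ a, (h a).length = k) (hk0 : 0 < k)
    (hsync : ∀ r < k, 0 < r → ∀ a b c, a ≠ b → ¬ h c <+: (h a ++ h b).drop r)
    {w : List α} (hw : IsSquarefreeWord w) {c : α} {j : ℕ} (hc : h c <+: (w.flatMap h).drop j) :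
    k ∣ j := by
  rw [← Nat.div_add_mod j k, ← List.drop_drop, drop_flatMap_of_uniform hk] at hc
  rcases Nat.eq_zero_or_pos (j % k) with hr0 | hr0
  · exact Nat.dvd_of_mod_eq_zero hr0
  have hr := Nat.mod_lt j hk0
  obtain ⟨a, b, t, hab⟩ : ∃ a b t, w.drop (j / k) = a :: b :: t := by
    have hlen := hc.length_le
    rcases hL : w.drop (j / k) with _ | ⟨a, _ | ⟨b, t⟩⟩
    · rw [hL] at hlen; simp [hk] at hlen; omega
    · rw [hL] at hlen; simp [hk] at hlen; omega
    · exact ⟨_, _, _, rfl⟩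
  have hne : a ≠ b := by
    rintro rfl
    have := hw.of_infix (hab ▸ List.drop_suffix _ w).isInfix
    exact isSquarefreeWord_iff_forall_infix.mp this [a] (by simp)
      (List.prefix_append [a, a] t).isInfix
  rw [hab, List.flatMap_cons, List.flatMap_cons, ← List.append_assoc,
    List.drop_append_of_le_length (by simp [hk]; omega)] at hc
  exact (hsync _ hr hr0 a b c hne
    (List.prefix_of_prefix_length_le hc (List.prefix_append _ _) (by simp [hk]; omega))).elim

theorem dvd_length_of_append_self_prefix_drop_flatMap (hk : ∀ a, (h a).length = k)
    (hsync : ∀ r < k, 0 < r → ∀ a b c, a ≠ b → ¬ h c <+: (h a ++ h b).drop r)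
    {w : List α} {x : List β} (hw : IsSquarefreeWord w) {r : ℕ} (hr : r < k)
    (hlong : 4 * k < r + 2 * x.length) (hsq : x ++ x <+: (w.flatMap h).drop r) :
    k ∣ x.length := by
  -- the block of `w[q]` lies inside the first half of the square
  obtain ⟨q, hrq, hqx⟩ : ∃ q, r ≤ k * q ∧ k * q + k ≤ r + x.length := by
    rcases Nat.eq_zero_or_pos r with rfl | hr0
    · exact ⟨0, by omega, by omega⟩
    · exact ⟨1, by omega, by omega⟩
  have hq : q < w.length := by
    have hlen := hsq.length_le
    simp only [List.length_append, List.length_drop, length_flatMap_of_uniform hk] at hlen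
    exact Nat.lt_of_mul_lt_mul_left (a := k) (by omega)
  have hblock : h w[q] <+: ((w.flatMap h).drop r).drop (k * q - r) := by
    rw [List.drop_drop, Nat.add_sub_cancel' hrq, drop_flatMap_of_uniform hk,
      List.drop_eq_getElem_cons hq, List.flatMap_cons]
    exact List.prefix_append _ _
  have hnext := prefix_drop_add_length_of_append_self_prefix hsq hblock (by rw [hk]; omega)
  rw [List.drop_drop, ← Nat.add_assoc, Nat.add_sub_cancel' hrq] at hnext
  exact (Nat.dvd_add_right (dvd_mul_right k q)).mp
    (dvd_of_prefix_drop_flatMap hk (by omega) hsync hw hnext)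

theorem not_isSquarefreeWord_of_append_self_prefix_flatMap (hk : ∀ a, (h a).length = k)
    (hinj : Function.Injective h) {w : List α} {x : List β} {m : ℕ}
    (hsq : x ++ x <+: w.flatMap h) (hm : x.length = k * m) (hx : x ≠ []) :
    ¬ IsSquarefreeWord w := by
  have hkm : 0 < k * m := hm ▸ List.length_pos_iff.mpr hx
  have hk0 := Nat.pos_of_mul_pos_right hkm
  have hm0 := Nat.pos_of_mul_pos_left hkm
  have hlen := hsq.length_le
  rw [List.length_append, length_flatMap_of_uniform hk, hm] at hlen
  replace hlen : m + m ≤ w.length := Nat.le_of_mul_le_mul_left (by linarith) hk0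
  obtain ⟨u, v, t, rfl, hu, hv⟩ :
      ∃ u v t, w = u ++ v ++ t ∧ u.length = m ∧ v.length = m :=
    ⟨w.take m, (w.drop m).take m, (w.drop m).drop m, by simp, by simp; omega, by simp; omega⟩
  obtain ⟨s, hs⟩ := hsq
  simp only [List.flatMap_append, List.append_assoc] at hs
  obtain ⟨hxu, hs⟩ := List.append_inj hs (by rw [hm, length_flatMap_of_uniform hk, hu])
  have hxv := List.append_inj_left hs (by rw [hm, length_flatMap_of_uniform hk, hv])
  obtain rfl := flatMap_inj_of_uniform hk hinj (hu.trans hv.symm) (hxu.symm.trans hxv)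
  rw [isSquarefreeWord_iff_forall_infix]
  exact fun hw => hw u (List.ne_nil_of_length_pos (by omega)) (List.prefix_append _ _).isInfix

theorem not_isSquarefreeWord_of_append_self_prefix_drop_flatMap (hk : ∀ a, (h a).length = k)
    (hinj : Function.Injective h)
    (hsplit : ∀ r < k, 0 < r → ∀ a b c,
      (h b).take r = (h c).take r ∧ (h b).drop r = (h a).drop r → a = b ∨ b = c)
    {w : List α} {x : List β} {r m : ℕ} (hr0 : 0 < r) (hr : r < k)
    (hsq : x ++ x <+: (w.flatMap h).drop r) (hm : x.length = k * m) (hx : x ≠ []) :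
    ¬ IsSquarefreeWord w := by
  have hkm : 0 < k * m := hm ▸ List.length_pos_iff.mpr hx
  have hm0 := Nat.pos_of_mul_pos_left hkm
  have hlen := hsq.length_le
  simp only [List.length_append, List.length_drop, length_flatMap_of_uniform hk, hm] at hlen
  replace hlen : m + m < w.length := Nat.lt_of_mul_lt_mul_left (a := k) (by rw [mul_add]; omega)
  obtain ⟨a, w, rfl⟩ := List.exists_cons_of_length_pos (by omega : 0 < w.length)
  simp only [List.length_cons] at hlen
  obtain ⟨u, w, rfl, hu⟩ : ∃ u w', w = u ++ w' ∧ u.length = m - 1 :=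
    ⟨w.take (m - 1), w.drop (m - 1), by simp, by simp; omega⟩
  simp only [List.length_append] at hlen
  obtain ⟨b, w, rfl⟩ := List.exists_cons_of_length_pos (by omega : 0 < w.length)
  simp only [List.length_cons] at hlen
  obtain ⟨v, w, rfl, hv⟩ : ∃ v w', w = v ++ w' ∧ v.length = m - 1 :=
    ⟨w.take (m - 1), w.drop (m - 1), by simp, by simp; omega⟩
  simp only [List.length_append] at hlen
  obtain ⟨c, t, rfl⟩ := List.exists_cons_of_length_pos (by omega : 0 < w.length)
  obtain ⟨s, hs⟩ := hsq
  simp only [List.flatMap_cons, List.flatMap_append, List.append_assoc] at hs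
  rw [List.drop_append_of_le_length (by rw [hk]; omega), ← List.take_append_drop r (h b),
    ← List.take_append_drop r (h c)] at hs
  have hblocks : x ++ (x ++ s) = ((h a).drop r ++ u.flatMap h ++ (h b).take r) ++
      (((h b).drop r ++ v.flatMap h ++ (h c).take r) ++ ((h c).drop r ++ t.flatMap h)) := by
    simpa only [List.append_assoc] using hs
  have hkm' : k * m = k * (m - 1) + k := by rw [← Nat.mul_add_one, Nat.sub_add_cancel hm0]
  have hlu : (u.flatMap h).length = k * (m - 1) := by rw [length_flatMap_of_uniform hk, hu]
  have hlv : (v.flatMap h).length = k * (m - 1) := by rw [length_flatMap_of_uniform hk, hv]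
  obtain ⟨hx₁, hrest⟩ := List.append_inj hblocks (by simp [hk, hlu, hm]; omega)
  have hx₂ := List.append_inj_left hrest (by simp [hk, hlv, hm]; omega)
  rw [hx₁] at hx₂
  obtain ⟨hx₂, hbc⟩ := List.append_inj hx₂ (by simp [hk, hlu, hlv])
  obtain ⟨hab, huv⟩ := List.append_inj hx₂ (by simp [hk])
  obtain rfl := flatMap_inj_of_uniform hk hinj (hu.trans hv.symm) huv
  rw [isSquarefreeWord_iff_forall_infix]
  intro hw
  rcases hsplit r hr hr0 a b c ⟨hbc, hab.symm⟩ with rfl | rfl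
  · exact hw (a :: u) (List.cons_ne_nil _ _) ⟨[], c :: t, by simp⟩
  · exact hw (u ++ [b]) (by simp) ⟨[a], t, by simp⟩

theorem infix_flatMap_take_of_prefix_drop_flatMap (hk : ∀ a, (h a).length = k)
    {w : List α} {y : List β} {r n : ℕ} (hy : y <+: (w.flatMap h).drop r)
    (hn : r + y.length ≤ k * n) : y <:+: (w.take n).flatMap h := by
  have hpre : (w.flatMap h).take r ++ y <+: (w.take n).flatMap h := by
    rw [← take_flatMap_of_uniform hk, List.prefix_take_iff]
    refine ⟨?_, by simp; omega⟩
    simpa only [List.take_append_drop] using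
      (List.prefix_append_right_inj ((w.flatMap h).take r)).mpr hy
  exact (List.suffix_append _ _).isInfix.trans hpre.isInfix

theorem IsSquarefreeWord.flatMap_of_uniform (hk : ∀ a, (h a).length = k)
    (hinj : Function.Injective h)
    (hsync : ∀ r < k, 0 < r → ∀ a b c, a ≠ b → ¬ h c <+: (h a ++ h b).drop r)
    (hsplit : ∀ r < k, 0 < r → ∀ a b c,
      (h b).take r = (h c).take r ∧ (h b).drop r = (h a).drop r → a = b ∨ b = c)
    (hshort : ∀ v : List α, v.length ≤ 4 → IsSquarefreeWord v →
      IsSquarefreeWord (v.flatMap h))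
    {w : List α} (hw : IsSquarefreeWord w) : IsSquarefreeWord (w.flatMap h) := by
  rw [isSquarefreeWord_iff_forall_infix]
  rintro x hx ⟨s, t, hst⟩
  have hk0 : 0 < k := by
    have := congrArg List.length hst
    simp only [List.length_append, length_flatMap_of_uniform hk] at this
    have := List.length_pos_iff.mpr hx
    exact Nat.pos_of_mul_pos_right (b := w.length) (by omega)
  set q := s.length / k
  set r := s.length % k
  have hr : r < k := Nat.mod_lt _ hk0
  have hw' : IsSquarefreeWord (w.drop q) := hw.of_infix (List.drop_suffix _ _).isInfix
  have hsq : x ++ x <+: ((w.drop q).flatMap h).drop r := by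
    rw [← drop_flatMap_of_uniform hk, List.drop_drop, Nat.div_add_mod, ← hst, List.append_assoc,
      List.drop_left' rfl]
    exact List.prefix_append _ _
  rcases le_or_gt (r + 2 * x.length) (4 * k) with hle | hlong
  · have hshort' :=
      hshort _ (List.length_take_le _ _) (hw'.of_infix (List.take_prefix _ _).isInfix)
    exact isSquarefreeWord_iff_forall_infix.mp hshort' x hx
      (infix_flatMap_take_of_prefix_drop_flatMap hk hsq (by simp; omega))
  obtain ⟨m, hm⟩ := dvd_length_of_append_self_prefix_drop_flatMap hk hsync hw' hr hlong hsq
  rcases Nat.eq_zero_or_pos r with hr0 | hr0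
  · rw [hr0, List.drop_zero] at hsq
    exact not_isSquarefreeWord_of_append_self_prefix_flatMap hk hinj hsq hm hx hw'
  · exact
      not_isSquarefreeWord_of_append_self_prefix_drop_flatMap hk hinj hsplit hr0 hr hsq hm hx hw'

end Uniform

def morphism11 : Fin 3 → List (Fin 3)
  | 0 => [0, 1, 0, 2, 0, 1, 2, 1, 0, 1, 2]
  | 1 => [0, 2, 1, 0, 1, 2, 1, 0, 2, 1, 2]
  | 2 => [0, 2, 1, 0, 2, 0, 1, 0, 2, 1, 2]

theorem mem_sections_replicate_finRange {n : ℕ} (v : List (Fin n)) :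
    v ∈ (List.replicate v.length (List.finRange n)).sections := by
  induction v with
  | nil => simp
  | cons a v ih => simpa [List.replicate_succ, List.mem_sections] using ih

theorem isSquarefreeWord_flatMap_morphism11_of_length_le_four (v : List (Fin 3))
    (hv : v.length ≤ 4) (hsq : IsSquarefreeWord v) : IsSquarefreeWord (v.flatMap morphism11) := by
  have hcheck : ∀ n ≤ 4, ∀ v ∈ (List.replicate n (List.finRange 3)).sections,
      IsSquarefreeWord v → IsSquarefreeWord (v.flatMap morphism11) := by
    decide +kernel
  exact hcheck _ hv v (mem_sections_replicate_finRange v) hsq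

theorem IsSquarefreeWord.flatMap_morphism11 {w : List (Fin 3)} (hw : IsSquarefreeWord w) :
    IsSquarefreeWord (w.flatMap morphism11) :=
  hw.flatMap_of_uniform (k := 11) (by decide) (by decide) (by decide) (by decide)
    isSquarefreeWord_flatMap_morphism11_of_length_le_four

theorem isSquarefreeWord_iterate_flatMap_morphism11 (n : ℕ) :
    IsSquarefreeWord ((·.flatMap morphism11)^[n] [0]) := by
  induction n with
  | zero => decide
  | succ n ih => rw [Function.iterate_succ_apply']; exact ih.flatMap_morphism11

theorem length_iterate_flatMap_morphism11 (n : ℕ) :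
    ((·.flatMap morphism11)^[n] [0]).length = 11 ^ n := by
  induction n with
  | zero => rfl
  | succ n ih =>
    rw [Function.iterate_succ_apply', length_flatMap_of_uniform (k := 11) (by decide), ih, pow_succ,
      mul_comm]

theorem ternary_squarefree_all_lengths :
    (∀ n : ℕ, ∃ w : List (Fin 3), w.length = n ∧ IsSquarefreeWord w) ∧
    {w : List (Fin 3) | IsSquarefreeWord w}.Infinite := by
  have hlengths : ∀ n : ℕ, ∃ w : List (Fin 3), w.length = n ∧ IsSquarefreeWord w := fun n =>
    ⟨((·.flatMap morphism11)^[n] [0]).take n,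
      by simp [length_iterate_flatMap_morphism11, (Nat.lt_pow_self (by norm_num : 1 < 11)).le],
      (isSquarefreeWord_iterate_flatMap_morphism11 n).of_infix (List.take_prefix _ _).isInfix⟩
  refine ⟨hlengths, ?_⟩
  choose f hlen hsq using hlengths
  exact Set.infinite_of_injective_forall_mem
    (fun a b hab => by simpa only [hlen] using congrArg List.length hab) hsq
end

section
/- The image of the Prouhet–Thue–Morse sequence under the map counting occurrences between consecutive letters (or any standard construction yielding a squarefree ternary sequence from the Thue–Morse sequence) produces an infinite squarefree word over a three-letter alphabet. -/
/-- The Prouhet–Thue–Morse sequence: parity of the number of 1s in the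
binary expansion of `n`. -/
def thueMorse (n : ℕ) : ℕ := (Nat.digits 2 n).count 1 % 2

lemma tm_le_one (n : ℕ) : thueMorse n ≤ 1 := Nat.lt_succ_iff.mp (Nat.mod_lt _ two_pos)

lemma tm_even (n : ℕ) : thueMorse (2 * n) = thueMorse n := by
  rcases Nat.eq_zero_or_pos n with h | h
  · subst h; rfl
  · unfold thueMorse
    rw [Nat.digits_def' (by norm_num : (1:ℕ) < 2) (by omega)]
    simp [Nat.mul_mod_right, Nat.mul_div_cancel_left _ (by norm_num : (0:ℕ) < 2)]

lemma tm_odd (n : ℕ) : thueMorse (2 * n + 1) = 1 - thueMorse n := by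
  unfold thueMorse
  rw [Nat.digits_def' (by norm_num : (1:ℕ) < 2) (by omega)]
  have h1 : (2 * n + 1) % 2 = 1 := by omega
  have h2 : (2 * n + 1) / 2 = n := by omega
  rw [h1, h2, List.count_cons]
  simp
  omega

/-- helper: rewrite thueMorse at an arbitrary even argument -/
lemma tm_even' {a b : ℕ} (h : a = 2 * b) : thueMorse a = thueMorse b := by
  rw [h, tm_even]

lemma tm_odd' {a b : ℕ} (h : a = 2 * b + 1) : thueMorse a = 1 - thueMorse b := by
  rw [h, tm_odd]

/-- no three consecutive equal values -/
lemma tm_no_three (n : ℕ) :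
    ¬ (thueMorse n = thueMorse (n + 1) ∧ thueMorse (n + 1) = thueMorse (n + 2)) := by
  rcases Nat.even_or_odd n with ⟨p, hp⟩ | ⟨p, hp⟩
  · have e1 := tm_even' (a := n) (b := p) (by omega)
    have e2 := tm_odd' (a := n + 1) (b := p) (by omega)
    have := tm_le_one p
    omega
  · have e1 := tm_even' (a := n + 1) (b := p + 1) (by omega)
    have e2 := tm_odd' (a := n + 2) (b := p + 1) (by omega)
    have := tm_le_one (p + 1)
    omega

/-- Thue–Morse is overlap-free. -/
lemma tm_overlap_free :
    ∀ L : ℕ, 0 < L → ∀ i : ℕ,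
      ¬ (∀ j ≤ L, thueMorse (i + j) = thueMorse (i + L + j)) := by
  intro L
  induction L using Nat.strong_induction_on with
  | _ L IH =>
    intro hL i h
    rcases Nat.even_or_odd L with ⟨m, hm⟩ | ⟨m, hm⟩
    · -- L even, L = m + m, m > 0
      have hm' : L = 2 * m := by omega
      have hmpos : 0 < m := by omega
      rcases Nat.even_or_odd i with ⟨p, hp⟩ | ⟨p, hp⟩
      · -- i = 2p
        refine IH m (by omega) hmpos p ?_
        intro j hj
        have hh := h (2 * j) (by omega)
        have e1 := tm_even' (a := i + 2 * j) (b := p + j) (by omega)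
        have e2 := tm_even' (a := i + L + 2 * j) (b := p + m + j) (by omega)
        rw [e1, e2] at hh
        exact hh
      · -- i = 2p + 1 : positions i + 2j are odd
        refine IH m (by omega) hmpos p ?_
        intro j hj
        have hh := h (2 * j) (by omega)
        have e1 := tm_odd' (a := i + 2 * j) (b := p + j) (by omega)
        have e2 := tm_odd' (a := i + L + 2 * j) (b := p + m + j) (by omega)
        rw [e1, e2] at hh
        have b1 := tm_le_one (p + j)
        have b2 := tm_le_one (p + m + j)
        omega
    · -- L odd, L = 2m + 1
      rcases Nat.eq_zero_or_pos m with hm0 | hmpos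
    -- L = 1
      · have h0 := h 0 (by omega)
        have h1 := h 1 (by omega)
        rw [show i + 0 = i from rfl, show i + L + 0 = i + 1 by omega] at h0
        rw [show i + L + 1 = i + 2 by omega] at h1
        exact tm_no_three i ⟨h0, h1⟩
      · -- L = 2m + 1, m ≥ 1
        rcases Nat.even_or_odd i with ⟨p, hp⟩ | ⟨p, hp⟩
        · -- i = 2p : use pairs (2p,2p+1), (2p+2,2p+3) in first block
          have h0 := h 0 (by omega)
          have h1 := h 1 (by omega)
          have h2 := h 2 (by omega)
          have h3 := h 3 (by omega)
          have e0l := tm_even' (a := i + 0) (b := p) (by omega)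
          have e0r := tm_odd' (a := i + L + 0) (b := p + m) (by omega)
          have e1l := tm_odd' (a := i + 1) (b := p) (by omega)
          have e1r := tm_even' (a := i + L + 1) (b := p + m + 1) (by omega)
          have e2l := tm_even' (a := i + 2) (b := p + 1) (by omega)
          have e2r := tm_odd' (a := i + L + 2) (b := p + m + 1) (by omega)
          have e3l := tm_odd' (a := i + 3) (b := p + 1) (by omega)
          have e3r := tm_even' (a := i + L + 3) (b := p + m + 2) (by omega)
          rw [e0l, e0r] at h0; rw [e1l, e1r] at h1
          rw [e2l, e2r] at h2; rw [e3l, e3r] at h3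
          have b1 := tm_le_one p; have b2 := tm_le_one (p + 1)
          have b3 := tm_le_one (p + m); have b4 := tm_le_one (p + m + 1)
          have b5 := tm_le_one (p + m + 2)
          refine tm_no_three (p + m) ⟨?_, ?_⟩ <;> omega
        · -- i = 2p + 1 : use pairs at 2k = i+L, i+L+2 in second block
          have h0 := h 0 (by omega)
          have h1 := h 1 (by omega)
          have h2 := h 2 (by omega)
          have h3 := h 3 (by omega)
          have e0l := tm_odd' (a := i + 0) (b := p) (by omega)
          have e0r := tm_even' (a := i + L + 0) (b := p + m + 1) (by omega)
          have e1l := tm_even' (a := i + 1) (b := p + 1) (by omega)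
          have e1r := tm_odd' (a := i + L + 1) (b := p + m + 1) (by omega)
          have e2l := tm_odd' (a := i + 2) (b := p + 1) (by omega)
          have e2r := tm_even' (a := i + L + 2) (b := p + m + 2) (by omega)
          have e3l := tm_even' (a := i + 3) (b := p + 2) (by omega)
          have e3r := tm_odd' (a := i + L + 3) (b := p + m + 2) (by omega)
          rw [e0l, e0r] at h0; rw [e1l, e1r] at h1
          rw [e2l, e2r] at h2; rw [e3l, e3r] at h3
          have b1 := tm_le_one p; have b2 := tm_le_one (p + 1)
          have b3 := tm_le_one (p + 2); have b4 := tm_le_one (p + m + 1)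
          have b5 := tm_le_one (p + m + 2)
          refine tm_no_three p ⟨?_, ?_⟩ <;> omega

/-- The derived ternary sequence: `c n` is the number of 1s between the
`n`-th and `(n+1)`-th occurrence of `0` in the Thue–Morse sequence. -/
noncomputable def tmTernary (n : ℕ) : ℕ :=
  Nat.nth (fun k => thueMorse k = 0) (n + 1) -
    Nat.nth (fun k => thueMorse k = 0) n - 1

lemma tm_count (n : ℕ) : Nat.count (fun k => thueMorse k = 0) (2 * n) = n := by
  induction n with
  | zero => rfl
  | succ n ih =>
    rw [show 2 * (n + 1) = 2 * n + 1 + 1 by omega,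
      Nat.count_succ, Nat.count_succ, ih]
    have e1 : thueMorse (2 * n) = thueMorse n := tm_even n
    have e2 : thueMorse (2 * n + 1) = 1 - thueMorse n := tm_odd n
    have b := tm_le_one n
    simp only [e1, e2]
    rcases (by omega : thueMorse n = 0 ∨ thueMorse n = 1) with h | h <;> simp [h]

lemma tm_nth (n : ℕ) :
    Nat.nth (fun k => thueMorse k = 0) n = 2 * n + thueMorse n := by
  have b := tm_le_one n
  rcases (by omega : thueMorse n = 0 ∨ thueMorse n = 1) with h | h
  · have hp : thueMorse (2 * n) = 0 := by rw [tm_even]; exact h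
    have := Nat.nth_count (p := fun k => thueMorse k = 0) hp
    rw [tm_count] at this
    omega
  · have hp : thueMorse (2 * n + 1) = 0 := by rw [tm_odd]; omega
    have := Nat.nth_count (p := fun k => thueMorse k = 0) hp
    have hc : Nat.count (fun k => thueMorse k = 0) (2 * n + 1) = n := by
      rw [Nat.count_succ, tm_count]
      have : thueMorse (2 * n) = 1 := by rw [tm_even]; exact h
      simp [this]
    rw [hc] at this
    rw [h, this]

lemma tm_ternary_eq (n : ℕ) :
    tmTernary n + thueMorse n = 1 + thueMorse (n + 1) := by
  have b1 := tm_le_one n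
  have b2 := tm_le_one (n + 1)
  unfold tmTernary
  rw [tm_nth, tm_nth]
  omega

theorem tmTernary_squarefree :
    (∀ n : ℕ, tmTernary n ≤ 2) ∧
    (∀ i L : ℕ, 0 < L → ∃ j < L, tmTernary (i + j) ≠ tmTernary (i + L + j)) := by
  constructor
  · intro n
    have := tm_ternary_eq n
    have b1 := tm_le_one n
    have b2 := tm_le_one (n + 1)
    omega
  · intro i L hL
    by_contra hcon
    push_neg at hcon
    -- step relation between thueMorse values
    have step : ∀ j < L, thueMorse (i + j + 1) + thueMorse (i + L + j) =
        thueMorse (i + L + j + 1) + thueMorse (i + j) := by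
      intro j hj
      have e1 := tm_ternary_eq (i + j)
      have e2 := tm_ternary_eq (i + L + j)
      have hc := hcon j hj
      have b1 := tm_le_one (i + j)
      have b2 := tm_le_one (i + j + 1)
      have b3 := tm_le_one (i + L + j)
      have b4 := tm_le_one (i + L + j + 1)
      omega
    -- invariant: constant difference
    have inv : ∀ j ≤ L, thueMorse (i + j) + thueMorse (i + L) =
        thueMorse (i + L + j) + thueMorse i := by
      intro j
      induction j with
      | zero =>
        intro _
        rw [show i + 0 = i from rfl, show i + L + 0 = i + L from rfl]
        omega
      | succ j ih =>
        intro hj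
        rw [show i + (j + 1) = i + j + 1 from rfl,
          show i + L + (j + 1) = i + L + j + 1 from rfl]
        have h1 := step j (by omega)
        have h2 := ih (by omega)
        have b1 := tm_le_one (i + j)
        have b2 := tm_le_one (i + j + 1)
        have b3 := tm_le_one (i + L + j)
        have b4 := tm_le_one (i + L + j + 1)
        have b5 := tm_le_one i
        have b6 := tm_le_one (i + L)
        omega
    by_cases hd : thueMorse i = thueMorse (i + L)
    · refine tm_overlap_free L hL i ?_
      intro j hj
      have := inv j hj
      have b1 := tm_le_one (i + j)
      have b2 := tm_le_one (i + L + j)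
      omega
    · have hLL := inv L le_rfl
      have b1 := tm_le_one i
      have b2 := tm_le_one (i + L)
      have b3 := tm_le_one (i + L + L)
      omega
end

section
/- For the growth rate s of ternary squarefree words, 952^{1/53} ≤ s, given the existence of a 54-Brinkhuis 952-triple; numerically, 952^{1/53} > 110^{1/42}, so this bound improves the earlier bound 110^{1/42}. -/
/-- The number of ternary squarefree words of length `n`. -/
noncomputable def sCount (n : ℕ) : ℕ :=
  {w : List (Fin 3) | w.length = n ∧ IsSquarefreeWord w}.ncard

/-- An `n`-Brinkhuis `k`-triple: three families of `k` distinct squarefree ternary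
words of length `n` such that substituting the three families for the three letters
of any squarefree word of length 3 always yields a squarefree word. -/
def IsBrinkhuisTriple (n k : ℕ) (B : Fin 3 → Fin k → List (Fin 3)) : Prop :=
  (∀ (i : Fin 3) (j : Fin k), (B i j).length = n ∧ IsSquarefreeWord (B i j)) ∧
  (∀ i : Fin 3, Function.Injective (B i)) ∧
  (∀ i₁ i₂ i₃ : Fin 3, IsSquarefreeWord [i₁, i₂, i₃] →
    ∀ j₁ j₂ j₃ : Fin k, IsSquarefreeWord (B i₁ j₁ ++ B i₂ j₂ ++ B i₃ j₃))

/-!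
Substituting, letter by letter, blocks of a Brinkhuis triple into a squarefree ternary word
gives a squarefree word (Brinkhuis). A square `x x` in the image either has period a multiple
of `n`, and then comparing the blocks under the two halves produces a square in the original
word or a square in the image of a squarefree word of length three; or it has not, and then no
block fits inside `x`, because blocks only occur at aligned positions, so the square lies in the
image of three consecutive letters. The substitution is injective, so `k ^ M * s_M ≤ s_(n M)`.
Along `M = n ^ t` the numbers `a_t = log s_(n^t) / n^t` satisfy `log k + a_t ≤ n a_(t+1)`, and in
the limit `log k + log s ≤ n log s`, that is `s ≥ k ^ (1 / (n - 1))`. The comparison with the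
earlier bound is `110 ^ 53 < 952 ^ 42`.
-/

open Filter Topology

theorem List.exists_of_append_eq_append_of_length_le {α : Type*} {u v u' v' : List α}
    (h : u ++ v = u' ++ v') (hl : u.length ≤ u'.length) : ∃ t, u' = u ++ t ∧ v = t ++ v' := by
  rcases List.append_eq_append_iff.1 h with ⟨t, rfl, rfl⟩ | ⟨t, rfl, rfl⟩
  · exact ⟨t, rfl, rfl⟩
  · obtain rfl : t = [] := by simpa using hl
    exact ⟨[], by simp, by simp⟩

theorem List.exists_eq_append_append_of_append_eq {α : Type*} {A b C P x Q : List α}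
    (h : A ++ b ++ C = P ++ x ++ Q) (hPA : P.length ≤ A.length)
    (hAx : A.length + b.length ≤ P.length + x.length) : ∃ y z, x = y ++ b ++ z := by
  rw [List.append_assoc, List.append_assoc] at h
  obtain ⟨y, rfl, hy⟩ := List.exists_of_append_eq_append_of_length_le h.symm hPA
  rw [← List.append_assoc] at hy
  obtain ⟨z, rfl, -⟩ := List.exists_of_append_eq_append_of_length_le hy.symm
    (by simp only [List.length_append] at hAx ⊢; omega)
  exact ⟨y, z, rfl⟩

namespace IsSquarefreeWord

variable {α : Type*}

theorem nil : IsSquarefreeWord ([] : List α) := by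
  rintro x hx ⟨a, b, h⟩
  simp_all

theorem of_infix_s17 {w y : List α} (h : IsSquarefreeWord w) (hyw : y <:+: w) :
    IsSquarefreeWord y := by
  obtain ⟨u, v, rfl⟩ := hyw
  rintro x hx ⟨a, b, rfl⟩
  exact h x hx ⟨u ++ a, b ++ v, by simp⟩

theorem ne_of_cons_cons {a b : α} {l : List α} (h : IsSquarefreeWord (a :: b :: l)) : a ≠ b := by
  rintro rfl
  exact h [a] (by simp) ⟨[], l, by simp⟩

end IsSquarefreeWord

theorem isSquarefreeWord_triple {α : Type*} {a b c : α} (hab : a ≠ b) (hbc : b ≠ c) :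
    IsSquarefreeWord [a, b, c] := by
  rintro x hx ⟨u, v, h⟩
  have hlen := congrArg List.length h
  have hx' : 0 < x.length := List.length_pos_iff.2 hx
  simp only [List.length_append, List.length_cons, List.length_nil] at hlen
  obtain ⟨y, rfl⟩ := List.length_eq_one_iff.1 (by omega : x.length = 1)
  match u, h with
  | [], h =>
    simp only [List.nil_append, List.cons_append, List.cons.injEq] at h
    exact hab (h.1.trans h.2.1.symm)
  | [_], h =>
    simp only [List.cons_append, List.nil_append, List.cons.injEq, List.nil_eq] at h
    exact hbc (h.2.1.trans h.2.2.1.symm)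
  | _ :: _ :: _, _ => simp only [List.length_cons] at hlen; omega

/-- A word over `Fin 3 × Fin k` is a ternary word (its first projection) together with a choice,
at each position, of one of the `k` blocks that may replace that letter. -/
def substBlocks {k : ℕ} (B : Fin 3 → Fin k → List (Fin 3)) (w : List (Fin 3 × Fin k)) :
    List (Fin 3) :=
  w.flatMap fun p => B p.1 p.2

section substBlocks

variable {n k : ℕ} {B : Fin 3 → Fin k → List (Fin 3)}

@[simp]
theorem substBlocks_nil : substBlocks B [] = [] := rfl

@[simp]
theorem substBlocks_cons (p : Fin 3 × Fin k) (w : List (Fin 3 × Fin k)) :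
    substBlocks B (p :: w) = B p.1 p.2 ++ substBlocks B w := rfl

@[simp]
theorem substBlocks_append (u v : List (Fin 3 × Fin k)) :
    substBlocks B (u ++ v) = substBlocks B u ++ substBlocks B v :=
  List.flatMap_append

namespace IsBrinkhuisTriple

theorem length_block (hB : IsBrinkhuisTriple n k B) (i : Fin 3) (j : Fin k) :
    (B i j).length = n :=
  (hB.1 i j).1

theorem isSquarefreeWord_block (hB : IsBrinkhuisTriple n k B) (i : Fin 3) (j : Fin k) :
    IsSquarefreeWord (B i j) :=
  (hB.1 i j).2

theorem block_ne_nil (hB : IsBrinkhuisTriple n k B) (hn : 0 < n) (i : Fin 3) (j : Fin k) :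
    B i j ≠ [] := by
  rw [← List.length_pos_iff, hB.length_block]
  exact hn

theorem isSquarefreeWord_block_append_block (hB : IsBrinkhuisTriple n k B) {i i' : Fin 3}
    (hi : i ≠ i') (j j' : Fin k) : IsSquarefreeWord (B i j ++ B i' j') := by
  obtain ⟨y, hy⟩ := exists_ne i'
  exact (hB.2.2 i i' y (isSquarefreeWord_triple hi hy.symm) j j' j).of_infix_s17 ⟨[], B y j, by simp⟩

theorem block_injective (hB : IsBrinkhuisTriple n k B) (hn : 0 < n) :
    Function.Injective fun p : Fin 3 × Fin k => B p.1 p.2 := by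
  rintro ⟨i, j⟩ ⟨i', j'⟩ h
  dsimp only at h
  by_cases hi : i = i'
  · subst hi
    rw [hB.2.1 i h]
  · exact absurd ⟨[], [], by rw [← h]; simp⟩
      (hB.isSquarefreeWord_block_append_block hi j j' _ (hB.block_ne_nil hn i j))

theorem block_ne_append_of_straddle (hB : IsBrinkhuisTriple n k B) {a b c : Fin 3}
    {j₀ j₁ j₂ : Fin k} {u v v' u' : List (Fin 3)} (hbc : b ≠ c) (hb : B b j₁ = u ++ v)
    (hc : B c j₂ = v' ++ u') (hv : v ≠ []) (hv' : v' ≠ []) : B a j₀ ≠ v ++ v' := by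
  intro ha
  by_cases hab : a = b
  · subst hab
    exact hB.isSquarefreeWord_block_append_block hbc j₀ j₂ v' hv' ⟨v, u', by rw [ha, hc]; simp⟩
  · exact hB.isSquarefreeWord_block_append_block (Ne.symm hab) j₁ j₀ v hv
      ⟨u, v', by rw [hb, ha]; simp⟩

theorem length_substBlocks (hB : IsBrinkhuisTriple n k B) (w : List (Fin 3 × Fin k)) :
    (substBlocks B w).length = n * w.length := by
  induction w with
  | nil => simp
  | cons p w ih =>
    simp only [substBlocks_cons, List.length_append, ih, hB.length_block, List.length_cons]
    ring

theorem exists_split_of_length_eq_mul (hB : IsBrinkhuisTriple n k B) {m : ℕ} :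
    ∀ {w : List (Fin 3 × Fin k)} {P R : List (Fin 3)}, substBlocks B w = P ++ R →
      P.length = n * m →
      ∃ w₁ w₂, w = w₁ ++ w₂ ∧ substBlocks B w₁ = P ∧ substBlocks B w₂ = R := by
  induction m with
  | zero =>
    intro w P R h hP
    obtain rfl : P = [] := List.eq_nil_of_length_eq_zero (by simpa using hP)
    exact ⟨[], w, rfl, rfl, h⟩
  | succ m ih =>
    rintro (_ | ⟨p, w⟩) P R h hP
    · obtain ⟨rfl, rfl⟩ := List.append_eq_nil_iff.1 h.symm
      exact ⟨[], [], rfl, rfl, rfl⟩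
    · rw [substBlocks_cons] at h
      obtain ⟨t, rfl, ht⟩ := List.exists_of_append_eq_append_of_length_le h
        (by rw [hP, hB.length_block]; exact Nat.le_mul_of_pos_right n m.succ_pos)
      obtain ⟨w₁, w₂, rfl, h₁, h₂⟩ := ih ht
        (by simp only [List.length_append, hB.length_block, Nat.mul_succ] at hP; omega)
      exact ⟨p :: w₁, w₂, rfl, by simp [h₁], h₂⟩

theorem exists_split_of_eq_append (hB : IsBrinkhuisTriple n k B) (hn : 0 < n)
    {w : List (Fin 3 × Fin k)} {P R : List (Fin 3)} (h : substBlocks B w = P ++ R) :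
    ∃ w₁ w₂ P₂, w = w₁ ++ w₂ ∧ P = substBlocks B w₁ ++ P₂ ∧ P₂.length < n ∧
      substBlocks B w₂ = P₂ ++ R := by
  have hdiv := Nat.div_add_mod P.length n
  have hmod := Nat.mod_lt P.length hn
  rw [← List.take_append_drop (n * (P.length / n)) P, List.append_assoc] at h
  obtain ⟨w₁, w₂, rfl, h₁, h₂⟩ := hB.exists_split_of_length_eq_mul (m := P.length / n) h
    (by rw [List.length_take]; omega)
  exact ⟨w₁, w₂, P.drop (n * (P.length / n)), rfl, by rw [h₁, List.take_append_drop],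
    by rw [List.length_drop]; omega, h₂⟩

theorem exists_cons_of_eq_append (hB : IsBrinkhuisTriple n k B) {w : List (Fin 3 × Fin k)}
    {u R : List (Fin 3)} (h : substBlocks B w = u ++ R) (hu : u ≠ []) (hun : u.length ≤ n) :
    ∃ p w' v, w = p :: w' ∧ B p.1 p.2 = u ++ v ∧ R = v ++ substBlocks B w' := by
  rcases w with _ | ⟨p, w'⟩
  · exact absurd (List.append_eq_nil_iff.1 h.symm).1 hu
  · obtain ⟨v, hv, hR⟩ := List.exists_of_append_eq_append_of_length_le h.symm
      (by rwa [hB.length_block])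
    exact ⟨p, w', v, rfl, hv, hR⟩

theorem substBlocks_injective (hB : IsBrinkhuisTriple n k B) (hn : 0 < n) :
    Function.Injective (substBlocks B) := by
  intro u
  induction u with
  | nil =>
    rintro (_ | ⟨p, v⟩) h
    · rfl
    · exact absurd (List.append_eq_nil_iff.1 h.symm).1 (hB.block_ne_nil hn _ _)
  | cons p u ih =>
    rintro (_ | ⟨p', v⟩) h
    · exact absurd (List.append_eq_nil_iff.1 h).1 (hB.block_ne_nil hn _ _)
    · obtain ⟨hp, huv⟩ := List.append_inj h (by rw [hB.length_block, hB.length_block])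
      rw [hB.block_injective hn hp, ih huv]

theorem isSquarefreeWord_substBlocks_of_length_le_three (hB : IsBrinkhuisTriple n k B) :
    ∀ {w : List (Fin 3 × Fin k)}, IsSquarefreeWord (w.map Prod.fst) → w.length ≤ 3 →
      IsSquarefreeWord (substBlocks B w)
  | [], _, _ => IsSquarefreeWord.nil
  | [p], _, _ => by simpa using hB.isSquarefreeWord_block p.1 p.2
  | [p₁, p₂], hw, _ => by
    simpa using hB.isSquarefreeWord_block_append_block hw.ne_of_cons_cons p₁.2 p₂.2
  | [p₁, p₂, p₃], hw, _ => by simpa [List.append_assoc] using hB.2.2 _ _ _ hw p₁.2 p₂.2 p₃.2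
  | _ :: _ :: _ :: _ :: _, _, hl => by simp only [List.length_cons] at hl; omega

-- A misaligned occurrence would straddle two adjacent blocks, whose letters differ.
theorem dvd_length_of_eq_append_block_append (hB : IsBrinkhuisTriple n k B) (hn : 0 < n)
    {w : List (Fin 3 × Fin k)} (hw : IsSquarefreeWord (w.map Prod.fst)) {a : Fin 3} {j : Fin k}
    {A C : List (Fin 3)} (h : substBlocks B w = A ++ B a j ++ C) : n ∣ A.length := by
  rw [List.append_assoc] at h
  obtain ⟨w₁, w₂, A₂, rfl, rfl, hA₂, h₂⟩ := hB.exists_split_of_eq_append hn h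
  suffices A₂ = [] by simp [this, hB.length_substBlocks]
  by_contra hne
  obtain ⟨p₁, w', v, rfl, h₁, hv⟩ := hB.exists_cons_of_eq_append h₂ hne hA₂.le
  have hvlen : A₂.length + v.length = n := by
    simpa [hB.length_block] using (congrArg List.length h₁).symm
  obtain ⟨t, ht, hC⟩ := List.exists_of_append_eq_append_of_length_le hv.symm
    (by rw [hB.length_block]; omega)
  have htlen : t.length = A₂.length := by
    have := congrArg List.length ht
    simp only [List.length_append, hB.length_block] at this
    omega
  have hne_t : t ≠ [] := by rw [← List.length_pos_iff, htlen, List.length_pos_iff]; exact hne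
  obtain ⟨p₂, w'', u', rfl, h₂', -⟩ := hB.exists_cons_of_eq_append hC hne_t (by omega)
  have hp : p₁.1 ≠ p₂.1 :=
    IsSquarefreeWord.ne_of_cons_cons (l := w''.map Prod.fst)
      (hw.of_infix_s17 ⟨w₁.map Prod.fst, [], by simp⟩)
  exact hB.block_ne_append_of_straddle hp h₁ h₂'
    (by rw [← List.length_pos_iff]; omega) hne_t ht

theorem dvd_length_of_square_containing_block (hB : IsBrinkhuisTriple n k B)
    (hn : 0 < n) {w : List (Fin 3 × Fin k)} (hw : IsSquarefreeWord (w.map Prod.fst))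
    {P x S y z : List (Fin 3)} {a : Fin 3} {j : Fin k}
    (h : substBlocks B w = P ++ x ++ x ++ S) (hx : x = y ++ B a j ++ z) : n ∣ x.length := by
  have h₁ := hB.dvd_length_of_eq_append_block_append hn hw
    (a := a) (j := j) (A := P ++ y) (C := z ++ x ++ S) (by rw [h]; nth_rw 1 [hx]; simp)
  have h₂ := hB.dvd_length_of_eq_append_block_append hn hw
    (a := a) (j := j) (A := P ++ x ++ y) (C := z ++ S) (by rw [h]; nth_rw 2 [hx]; simp)
  simp only [List.length_append] at h₁ h₂
  exact (Nat.dvd_add_right h₁).1 (by rwa [Nat.add_right_comm])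

-- No block fits inside `x`, so `P ++ x ++ x` lies within the first three blocks.
theorem false_of_square_of_not_dvd (hB : IsBrinkhuisTriple n k B) (hn : 0 < n)
    {w : List (Fin 3 × Fin k)} (hw : IsSquarefreeWord (w.map Prod.fst)) {P x S : List (Fin 3)}
    (h : substBlocks B w = P ++ x ++ x ++ S) (hP : P.length < n) (hx : x ≠ [])
    (hdvd : ¬ n ∣ x.length) : False := by
  have hlen := congrArg List.length h
  simp only [hB.length_substBlocks, List.length_append] at hlen
  by_cases hshort : P.length + 2 * x.length ≤ 3 * n
  · have hpre : P ++ x ++ x <+: substBlocks B (w.take 3) := by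
      refine List.prefix_of_prefix_length_le ⟨S, h.symm⟩ ?_ ?_
      · rw [← List.take_append_drop 3 w, substBlocks_append, List.take_append_drop]
        exact List.prefix_append _ _
      · rw [hB.length_substBlocks, List.length_take]
        rcases le_total 3 w.length with h3 | h3
        · rw [Nat.min_eq_left h3]; simp only [List.length_append]; omega
        · rw [Nat.min_eq_right h3]; simp only [List.length_append]; omega
    obtain ⟨S', hS'⟩ := hpre
    have hsf := hB.isSquarefreeWord_substBlocks_of_length_le_three
      (hw.of_infix_s17 ((List.take_prefix 3 w).map _).isInfix)
      (List.length_take_le 3 w)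
    exact hsf x hx ⟨P, S', hS'.symm⟩
  · rcases w with _ | ⟨p₀, _ | ⟨p₁, _ | ⟨p₂, w'⟩⟩⟩
    all_goals simp only [List.length_cons, List.length_nil] at hlen
    · omega
    · omega
    · omega
    have h' := h
    simp only [substBlocks_cons, ← List.append_assoc] at h'
    by_cases hmid : 2 * n ≤ P.length + x.length
    · obtain ⟨y, z, hyz⟩ := List.exists_eq_append_append_of_append_eq
        (A := B p₀.1 p₀.2) (b := B p₁.1 p₁.2) (C := B p₂.1 p₂.2 ++ substBlocks B w')
        (P := P) (x := x) (Q := x ++ S)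
        (by simpa using h') (by rw [hB.length_block]; omega)
        (by rw [hB.length_block, hB.length_block]; omega)
      exact hdvd (hB.dvd_length_of_square_containing_block hn hw h hyz)
    · obtain ⟨y, z, hyz⟩ := List.exists_eq_append_append_of_append_eq
        (A := B p₀.1 p₀.2 ++ B p₁.1 p₁.2) (b := B p₂.1 p₂.2) (C := substBlocks B w')
        (P := P ++ x) (x := x) (Q := S)
        (by rw [h']) (by simp only [List.length_append, hB.length_block]; omega)
        (by simp only [List.length_append, hB.length_block]; omega)
      exact hdvd (hB.dvd_length_of_square_containing_block hn hw h hyz)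

theorem false_of_aligned_square (hB : IsBrinkhuisTriple n k B) (hn : 0 < n)
    {w : List (Fin 3 × Fin k)} (hw : IsSquarefreeWord (w.map Prod.fst)) {x S : List (Fin 3)}
    (h : substBlocks B w = x ++ (x ++ S)) (hx : x ≠ []) (hdvd : n ∣ x.length) : False := by
  obtain ⟨c, hc⟩ := hdvd
  obtain ⟨w₁, w₂, rfl, h₁, h₂⟩ := hB.exists_split_of_length_eq_mul h hc
  obtain ⟨w₃, w₄, rfl, h₃, -⟩ := hB.exists_split_of_length_eq_mul h₂ hc
  obtain rfl := hB.substBlocks_injective hn (h₁.trans h₃.symm)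
  refine hw (w₁.map Prod.fst) ?_ ⟨[], w₄.map Prod.fst, by simp⟩
  rintro hnil
  rw [List.map_eq_nil_iff.1 hnil] at h₁
  exact hx h₁.symm

-- Either two consecutive letters among `p₀.1, p₁.1, p₂.1` agree, giving a square in the word,
-- or `B p₀ ++ B p₁ ++ B p₂` contains the square `(z ++ α) (z ++ α)`.
theorem not_isSquarefreeWord_of_blocks (hB : IsBrinkhuisTriple n k B)
    {p₀ p₁ p₂ : Fin 3 × Fin k} {m w : List (Fin 3 × Fin k)} {P z α z' : List (Fin 3)}
    (h₀ : B p₀.1 p₀.2 = P ++ z) (h₁ : B p₁.1 p₁.2 = α ++ z) (h₂ : B p₂.1 p₂.2 = α ++ z')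
    (hz : z ≠ []) : ¬ IsSquarefreeWord ((p₀ :: m ++ p₁ :: m ++ p₂ :: w).map Prod.fst) := by
  intro hw
  by_cases h01 : p₀.1 = p₁.1
  · exact hw ((p₀ :: m).map Prod.fst) (by simp)
      ⟨[], (p₂ :: w).map Prod.fst, by simp [h01]⟩
  by_cases h12 : p₁.1 = p₂.1
  · exact hw ((m ++ [p₁]).map Prod.fst) (by simp)
      ⟨[p₀.1], w.map Prod.fst, by simp [h12]⟩
  exact hB.2.2 _ _ _ (isSquarefreeWord_triple h01 h12) p₀.2 p₁.2 p₂.2 (z ++ α) (by simp [hz])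
    ⟨P, z', by rw [h₀, h₁, h₂]; simp⟩

theorem false_of_square_of_dvd (hB : IsBrinkhuisTriple n k B) (hn : 0 < n)
    {w : List (Fin 3 × Fin k)} (hw : IsSquarefreeWord (w.map Prod.fst)) {P x S : List (Fin 3)}
    (h : substBlocks B w = P ++ x ++ x ++ S) (hP : P.length < n) (hx : x ≠ [])
    (hdvd : n ∣ x.length) : False := by
  obtain ⟨c, hc⟩ := hdvd
  by_cases hP₀ : P = []
  · subst hP₀
    exact hB.false_of_aligned_square hn hw (by simpa using h) hx ⟨c, hc⟩
  -- Writing `x = z ++ y ++ α` with `B p₀ = P ++ z` and `|y| = n c`, the word peels off as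
  -- `w = p₀ :: w₂ ++ p₁ :: w₂ ++ p₂ :: _` with `B p₁ = α ++ z` and `B p₂ = α ++ z'`.
  rw [List.append_assoc, List.append_assoc] at h
  obtain _ | c := c
  · exact hx (List.eq_nil_of_length_eq_zero (by simpa using hc))
  obtain ⟨p₀, w₁, z, rfl, h₀, h₁⟩ := hB.exists_cons_of_eq_append h hP₀ hP.le
  have hz : P.length + z.length = n := by
    simpa [hB.length_block] using (congrArg List.length h₀).symm
  obtain ⟨x', rfl, hx'⟩ := List.exists_of_append_eq_append_of_length_le h₁.symm
    (by rw [hc, Nat.mul_succ]; omega)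
  obtain ⟨y, α, rfl, hy⟩ : ∃ y α, x' = y ++ α ∧ y.length = n * c :=
    ⟨x'.take (n * c), x'.drop (n * c), (List.take_append_drop _ _).symm, by
      simp only [List.length_append, Nat.mul_succ] at hc
      simp only [List.length_take]; omega⟩
  have hα : α.length = P.length := by
    simp only [List.length_append, Nat.mul_succ] at hc
    omega
  have hα₀ : α ≠ [] := by rw [← List.length_pos_iff, hα, List.length_pos_iff]; exact hP₀
  obtain ⟨w₂, w₃, rfl, h₂, h₃⟩ := hB.exists_split_of_length_eq_mul
    (R := α ++ z ++ y ++ α ++ S) (by rw [hx']; simp) hy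
  obtain ⟨p₁, w₄, v, rfl, h₄, h₅⟩ := hB.exists_cons_of_eq_append (u := α ++ z)
    (R := y ++ α ++ S) (by rw [h₃]; simp) (by simp [hα₀])
    (by simp only [List.length_append]; omega)
  obtain rfl : v = [] := List.eq_nil_of_length_eq_zero (by
    have := congrArg List.length h₄
    simp only [List.length_append, hB.length_block] at this
    omega)
  obtain ⟨w₅, w₆, rfl, h₆, h₇⟩ := hB.exists_split_of_length_eq_mul (R := α ++ S)
    (by simpa using h₅.symm) hy
  obtain rfl := hB.substBlocks_injective hn (h₂.trans h₆.symm)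
  obtain ⟨p₂, w₇, z', rfl, h₈, -⟩ := hB.exists_cons_of_eq_append h₇ hα₀ (by omega)
  exact hB.not_isSquarefreeWord_of_blocks h₀ (by simpa using h₄) h₈
    (by rw [← List.length_pos_iff]; omega) (by simpa using hw)

theorem isSquarefreeWord_substBlocks (hB : IsBrinkhuisTriple n k B) (hn : 0 < n)
    {w : List (Fin 3 × Fin k)} (hw : IsSquarefreeWord (w.map Prod.fst)) :
    IsSquarefreeWord (substBlocks B w) := by
  rintro x hx ⟨P, S, h⟩
  rw [List.append_assoc, List.append_assoc] at h
  obtain ⟨w₁, w₂, P₂, rfl, rfl, hP₂, h₂⟩ := hB.exists_split_of_eq_append hn h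
  have hw₂ : IsSquarefreeWord (w₂.map Prod.fst) := hw.of_infix_s17 ⟨w₁.map Prod.fst, [], by simp⟩
  rw [← List.append_assoc, ← List.append_assoc] at h₂
  by_cases hdvd : n ∣ x.length
  · exact hB.false_of_square_of_dvd hn hw₂ h₂ hP₂ hx hdvd
  · exact hB.false_of_square_of_not_dvd hn hw₂ h₂ hP₂ hx hdvd

theorem pow_mul_sCount_le (hB : IsBrinkhuisTriple n k B) (hn : 0 < n) (M : ℕ) :
    k ^ M * sCount M ≤ sCount (n * M) := by
  have hcard : k ^ M * sCount M =
      ({w : List (Fin 3) | w.length = M ∧ IsSquarefreeWord w} ×ˢ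
        (Set.univ : Set (Fin M → Fin k))).ncard := by
    rw [Set.ncard_prod, Set.ncard_univ, Nat.card_fun, sCount, Nat.mul_comm]
    simp
  rw [hcard, sCount]
  refine Set.ncard_le_ncard_of_injOn (fun p => substBlocks B (p.1.zip (List.ofFn p.2)))
    ?_ ?_ ((List.finite_length_eq _ _).subset fun w hw => hw.1)
  · rintro ⟨w, f⟩ ⟨⟨hwl, hwsf⟩, -⟩
    refine ⟨by simp [hB.length_substBlocks, hwl], hB.isSquarefreeWord_substBlocks hn ?_⟩
    rwa [List.map_fst_zip (by simp [hwl])]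
  · rintro ⟨w₁, f₁⟩ ⟨⟨hw₁, -⟩, -⟩ ⟨w₂, f₂⟩ ⟨⟨hw₂, -⟩, -⟩ h
    have hunzip := congrArg List.unzip (hB.substBlocks_injective hn h)
    rw [List.unzip_zip (by simp [hw₁]), List.unzip_zip (by simp [hw₂])] at hunzip
    simp only [Prod.mk.injEq, List.ofFn_inj] at hunzip
    rw [hunzip.1, hunzip.2]

end IsBrinkhuisTriple

end substBlocks

theorem one_le_sCount_one : 1 ≤ sCount 1 := by
  have h01 : IsSquarefreeWord [(0 : Fin 3), 1, 0] := isSquarefreeWord_triple (by decide) (by decide)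
  exact (Set.ncard_pos ((List.finite_length_eq _ _).subset fun w hw => hw.1)).2
    ⟨[0], rfl, h01.of_infix_s17 ⟨[], [1, 0], rfl⟩⟩

theorem le_of_tendsto_of_const_add_le_mul {a : ℕ → ℝ} {c L r : ℝ}
    (ha : Tendsto a atTop (𝓝 L)) (hstep : ∀ t, c + a t ≤ r * a (t + 1)) : c + L ≤ r * L :=
  le_of_tendsto_of_tendsto' (ha.const_add c)
    ((ha.comp (tendsto_add_atTop_nat 1)).const_mul r) hstep

theorem rpow_one_div_sub_one_le_of_tendsto {u : ℕ → ℝ} {n : ℕ} {k s : ℝ} (hn : 2 ≤ n)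
    (hk : 1 ≤ k) (hu : 1 ≤ u 1) (hstep : ∀ M, k ^ M * u M ≤ u (n * M))
    (hs : Tendsto (fun M : ℕ => u M ^ (1 / (M : ℝ))) atTop (𝓝 s)) :
    k ^ (1 / ((n : ℝ) - 1)) ≤ s := by
  have hn' : (1 : ℝ) < n := by exact_mod_cast hn
  have hv : ∀ t, 1 ≤ u (n ^ t) := by
    intro t
    induction t with
    | zero => simpa using hu
    | succ t ih =>
      rw [pow_succ', ← mul_one (1 : ℝ)]
      exact (mul_le_mul (one_le_pow₀ hk) ih zero_le_one (by positivity)).trans (hstep _)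
  have hsub : Tendsto (fun t => u (n ^ t) ^ (1 / ((n : ℝ) ^ t))) atTop (𝓝 s) := by
    refine (hs.comp (tendsto_pow_atTop_atTop_of_one_lt (by omega : 1 < n))).congr fun t => ?_
    simp
  have hs1 : 1 ≤ s := ge_of_tendsto' hsub fun t => Real.one_le_rpow (hv t) (by positivity)
  have hlog : Tendsto (fun t => Real.log (u (n ^ t)) / (n : ℝ) ^ t) atTop (𝓝 (Real.log s)) := by
    refine (hsub.log (zero_lt_one.trans_le hs1).ne').congr fun t => ?_
    rw [Real.log_rpow (by linarith [hv t]), one_div_mul_eq_div]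
  have key : Real.log k + Real.log s ≤ n * Real.log s := by
    refine le_of_tendsto_of_const_add_le_mul hlog fun t => ?_
    have hk' : 0 < k ^ n ^ t := pow_pos (by linarith) _
    have hu' : 0 < u (n ^ t) := by linarith [hv t]
    have h := Real.log_le_log (mul_pos hk' hu') (hstep (n ^ t))
    rw [Real.log_mul hk'.ne' hu'.ne', Real.log_pow] at h
    simp only [pow_succ']
    push_cast at h ⊢
    field_simp
    linarith
  rw [Real.rpow_def_of_pos (by linarith), ← Real.exp_log (by linarith : 0 < s)]
  apply Real.exp_le_exp.2
  rw [mul_one_div, div_le_iff₀ (by linarith)]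
  linarith

theorem improved_lower_bound
    (hex : ∃ B : Fin 3 → Fin 952 → List (Fin 3), IsBrinkhuisTriple 54 952 B)
    (s : ℝ)
    (hs : Filter.Tendsto (fun m : ℕ => (sCount m : ℝ) ^ (1 / (m : ℝ)))
      Filter.atTop (nhds s)) :
    (952 : ℝ) ^ ((1 : ℝ) / 53) ≤ s ∧
      (110 : ℝ) ^ ((1 : ℝ) / 42) < (952 : ℝ) ^ ((1 : ℝ) / 53) := by
  obtain ⟨B, hB⟩ := hex
  constructor
  · have h := rpow_one_div_sub_one_le_of_tendsto (u := fun M => (sCount M : ℝ)) (n := 54)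
      (by norm_num) (by norm_num : (1 : ℝ) ≤ 952) (by exact_mod_cast one_le_sCount_one)
      (fun M => by exact_mod_cast hB.pow_mul_sCount_le (by norm_num) M) hs
    norm_num at h
    exact h
  · have key : ((110 : ℝ) ^ ((1 : ℝ) / 42)) ^ (2226 : ℕ)
        < ((952 : ℝ) ^ ((1 : ℝ) / 53)) ^ (2226 : ℕ) := by
      rw [← Real.rpow_natCast, ← Real.rpow_natCast, ← Real.rpow_mul (by norm_num),
        ← Real.rpow_mul (by norm_num)]
      norm_num
    exact lt_of_pow_lt_pow_left₀ 2226 (by positivity) key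
end
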